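/- Let u be any solution of the equation (‖u'‖^l u')' + ‖A^{1/2}u‖^β A u + g(u') = 0 with u ∈ C¹(ℝ⁺, H) and ‖u'‖^l u' ∈ C¹(ℝ⁺, H). Then the total energy E(t) = ((l+1)/(l+2))‖u'(t)‖^(l+2) + (1/(β+2))‖A^{1/2}u(t)‖^(β+2) is differentiable and satisfies E'(t) = -⟨g(u'(t)), u'(t)⟩ for all t ≥ 0. -/

import Mathlib

/-!
With `ψ = ‖u'‖^l • u'` one has `‖u'‖^(l+2) = ‖ψ‖^p` for `p = (l+2)/(l+1) > 1`, and `x ↦ ‖x‖^p` is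
differentiable on the whole space, including at `0`. The chain rule therefore differentiates the
kinetic energy using only the differentiability of `ψ`, not that of `u'`, and gives `⟪ψ', u'⟫`.
The potential energy is `(1/(β+2)) ⟪Au, u⟫^((β+2)/2)` with exponent `≥ 1`, whose derivative is
`‖A^{1/2}u‖^β ⟪Au, u'⟫` by symmetry of `A`. Pairing the equation with `u'` sums these to
`-⟪g(u'), u'⟫`.
-/

open RealInnerProductSpace

section

variable {E : Type*} [NormedAddCommGroup E] [InnerProductSpace ℝ E] {l : ℝ}

lemma norm_rpow_smul_self (hl : l + 1 ≠ 0) (v : E) : ‖‖v‖ ^ l • v‖ = ‖v‖ ^ (l + 1) := by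
  rw [norm_smul, Real.norm_of_nonneg (by positivity), Real.rpow_add' (norm_nonneg v) hl,
    Real.rpow_one]

lemma norm_rpow_add_two_eq_norm_rpow_smul_self_rpow (hl : 0 < l + 1) (v : E) :
    ‖v‖ ^ (l + 2) = ‖‖v‖ ^ l • v‖ ^ ((l + 2) / (l + 1)) := by
  rw [norm_rpow_smul_self hl.ne', ← Real.rpow_mul (norm_nonneg v), mul_div_cancel₀ _ hl.ne']

lemma norm_rpow_neg_mul_inner_rpow_smul_self (v w : E) :
    ‖v‖ ^ (-l) * ⟪‖v‖ ^ l • v, w⟫ = ⟪v, w⟫ := by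
  rcases eq_or_ne v 0 with rfl | hv
  · simp
  · rw [real_inner_smul_left, ← mul_assoc, ← Real.rpow_add (norm_pos_iff.mpr hv),
      neg_add_cancel, Real.rpow_zero, one_mul]

theorem HasDerivWithinAt.mul_norm_rpow_of_rpow_smul {v : ℝ → E} {φ' : E} {s : Set ℝ} {t : ℝ}
    (hl : 0 < l + 1) (h : HasDerivWithinAt (fun τ => ‖v τ‖ ^ l • v τ) φ' s t) :
    HasDerivWithinAt (fun τ => (l + 1) / (l + 2) * ‖v τ‖ ^ (l + 2)) ⟪φ', v t⟫ s t := by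
  set p := (l + 2) / (l + 1) with hp_def
  have hp : 1 < p := by rw [lt_div_iff₀ hl]; linarith
  have hchain := ((hasFDerivAt_norm_rpow _ hp).comp_hasDerivWithinAt t h).const_mul
    ((l + 1) / (l + 2))
  simp_rw [norm_rpow_add_two_eq_norm_rpow_smul_self_rpow hl]
  refine hchain.congr_deriv ?_
  have hexp : ‖‖v t‖ ^ l • v t‖ ^ (p - 2) = ‖v t‖ ^ (-l) := by
    rw [norm_rpow_smul_self hl.ne', ← Real.rpow_mul (norm_nonneg _)]
    congr 1
    rw [hp_def]; field_simp; ring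
  have hcoef : (l + 1) / (l + 2) * p = 1 := by
    have : l + 2 ≠ 0 := by linarith
    rw [hp_def]; field_simp
  simp only [FunLike.coe_smul, Pi.smul_apply, innerSL_apply_apply, smul_eq_mul, hexp]
  rw [← mul_assoc, ← mul_assoc, hcoef, one_mul, norm_rpow_neg_mul_inner_rpow_smul_self,
    real_inner_comm]

theorem HasDerivWithinAt.inner_apply_self {A : E →L[ℝ] E} (hA : (A : E →ₗ[ℝ] E).IsSymmetric) {u : ℝ → E}
    {u' : E} {s : Set ℝ} {t : ℝ} (hu : HasDerivWithinAt u u' s t) :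
    HasDerivWithinAt (fun τ => ⟪A (u τ), u τ⟫) (2 * ⟪A (u t), u'⟫) s t := by
  refine ((A.hasFDerivAt.comp_hasDerivWithinAt t hu).inner ℝ hu).congr_deriv ?_
  have : ⟪A u', u t⟫ = ⟪A (u t), u'⟫ := by
    rw [← ContinuousLinearMap.coe_coe A, hA, real_inner_comm]
  rw [Function.comp_apply, this]; ring

end

theorem HasDerivWithinAt.one_div_add_two_mul_sqrt_rpow {f : ℝ → ℝ} {f' β : ℝ} {s : Set ℝ}
    {t : ℝ} (hβ : 0 ≤ β) (hf₀ : ∀ τ, 0 ≤ f τ) (hf : HasDerivWithinAt f f' s t) :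
    HasDerivWithinAt (fun τ => 1 / (β + 2) * √(f τ) ^ (β + 2)) (√(f t) ^ β * f' / 2) s t := by
  have hp : 1 ≤ (β + 2) / 2 := by linarith
  have h := (hf.rpow_const (Or.inr hp)).const_mul (1 / (β + 2))
  simp_rw [← Real.rpow_div_two_eq_sqrt _ (hf₀ _)]
  refine h.congr_deriv ?_
  have : β + 2 ≠ 0 := by linarith
  rw [show (β + 2) / 2 - 1 = β / 2 by ring]
  field_simp

theorem stmt_11_general {H : Type*} [NormedAddCommGroup H] [InnerProductSpace ℝ H]
    (l β : ℝ) (hl : 0 < l) (hβ : 0 < β)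
    (A : H →L[ℝ] H)
    (hAsym : ∀ x y : H, ⟪A x, y⟫ = ⟪x, A y⟫)
    (hAcoerc : ∃ lam > (0 : ℝ), ∀ x : H, ⟪A x, x⟫ ≥ lam * ‖x‖ ^ 2)
    (g : H → H)
    (u u' ψ' : ℝ → H)
    (hu : ∀ t ∈ Set.Ici (0 : ℝ), HasDerivWithinAt u (u' t) (Set.Ici 0) t)
    (hψ : ∀ t ∈ Set.Ici (0 : ℝ),
      HasDerivWithinAt (fun t => ‖u' t‖ ^ l • u' t) (ψ' t) (Set.Ici 0) t)
    (heq : ∀ t ∈ Set.Ici (0 : ℝ),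
      ψ' t + (Real.sqrt ⟪A (u t), u t⟫) ^ β • A (u t) + g (u' t) = 0) :
    ∀ t ∈ Set.Ici (0 : ℝ),
      HasDerivWithinAt
        (fun t => ((l + 1) / (l + 2)) * ‖u' t‖ ^ (l + 2)
          + (1 / (β + 2)) * (Real.sqrt ⟪A (u t), u t⟫) ^ (β + 2))
        (-⟪g (u' t), u' t⟫) (Set.Ici 0) t := by
  intro t ht
  have hA₀ : ∀ x : H, 0 ≤ ⟪A x, x⟫ := by
    obtain ⟨lam, hlam, hcoerc⟩ := hAcoerc
    exact fun x => le_trans (by positivity) (hcoerc x)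
  have hkin := (hψ t ht).mul_norm_rpow_of_rpow_smul (by linarith)
  have hpot := ((hu t ht).inner_apply_self hAsym).one_div_add_two_mul_sqrt_rpow hβ.le
    fun τ => hA₀ (u τ)
  have hpair : ⟪ψ' t, u' t⟫ + √⟪A (u t), u t⟫ ^ β * ⟪A (u t), u' t⟫ + ⟪g (u' t), u' t⟫ = 0 := by
    simpa only [inner_add_left, real_inner_smul_left, inner_zero_left]
      using congrArg (⟪·, u' t⟫) (heq t ht)
  refine (hkin.add hpot).congr_deriv ?_
  linear_combination hpair

theorem stmt_11 {H : Type*} [NormedAddCommGroup H] [InnerProductSpace ℝ H]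
    [FiniteDimensional ℝ H]
    (l β : ℝ) (hl : 0 < l) (hβ : 0 < β)
    (A : H →L[ℝ] H)
    (hAsym : ∀ x y : H, ⟪A x, y⟫ = ⟪x, A y⟫)
    (hAcoerc : ∃ lam > (0 : ℝ), ∀ x : H, ⟪A x, x⟫ ≥ lam * ‖x‖ ^ 2)
    (g : H → H) (hg : LocallyLipschitz g)
    (u u' ψ' : ℝ → H)
    (hu : ∀ t ∈ Set.Ici (0 : ℝ), HasDerivWithinAt u (u' t) (Set.Ici 0) t)
    (hu'c : ContinuousOn u' (Set.Ici 0))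
    (hψ : ∀ t ∈ Set.Ici (0 : ℝ),
      HasDerivWithinAt (fun t => ‖u' t‖ ^ l • u' t) (ψ' t) (Set.Ici 0) t)
    (hψ'c : ContinuousOn ψ' (Set.Ici 0))
    (heq : ∀ t ∈ Set.Ici (0 : ℝ),
      ψ' t + (Real.sqrt ⟪A (u t), u t⟫) ^ β • A (u t) + g (u' t) = 0) :
    ∀ t ∈ Set.Ici (0 : ℝ),
      HasDerivWithinAt
        (fun t => ((l + 1) / (l + 2)) * ‖u' t‖ ^ (l + 2)
          + (1 / (β + 2)) * (Real.sqrt ⟪A (u t), u t⟫) ^ (β + 2))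
        (-⟪g (u' t), u' t⟫) (Set.Ici 0) t :=
  stmt_11_general l β hl hβ A hAsym hAcoerc g u u' ψ' hu hψ heq
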